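/- Let A be a pre-Lie ring of cardinality p^n for a prime p > 3 and a natural number n, satisfying Property 3, and set c = ⌊(p − 1)/4⌋. Then for every s ≥ 1, all a_1, …, a_{s·c} ∈ A and every b ∈ ann(p^s), one has a_1·(a_2·(⋯·(a_{s·c}·b)⋯)) = 0. -/

import Mathlib

/-- A pre-Lie ring: an abelian group with a bi-additive multiplication satisfying
`(x·y)·z − x·(y·z) = (y·x)·z − y·(x·z)`. -/
class PreLieRing (A : Type*) extends AddCommGroup A where
  mul : A → A → A
  add_mul' : ∀ a b c : A, mul (a + b) c = mul a c + mul b c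
  mul_add' : ∀ a b c : A, mul a (b + c) = mul a b + mul a c
  pre_lie : ∀ x y z : A,
    mul (mul x y) z - mul x (mul y z) = mul (mul y x) z - mul y (mul x z)

namespace PreLieRing

variable {A : Type*} [PreLieRing A]

/-- `ann (p^i) = {a : p^i • a = 0}`. -/
def ann (p i : ℕ) : Set A := {a : A | (p ^ i : ℕ) • a = 0}

/-- `p^i • A = {p^i • a : a ∈ A}`. -/
def pA (p i : ℕ) : Set A := Set.range (fun a : A => (p ^ i : ℕ) • a)

/-- Nested left-normed product `a₁ · (a₂ · (⋯ · (aₘ · b)⋯))`. -/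
def nestedMul : List A → A → A
  | [], b => b
  | a :: l, b => mul a (nestedMul l b)

/-- `Lpow a m x = L_a^m(x)`, the `m`-fold left multiplication by `a`. -/
def Lpow (a : A) (m : ℕ) (x : A) : A := (fun y => mul a y)^[m] x

/-- Property 3 (with `c = ⌊(p-1)/4⌋`): products of `c` elements lie in `p·A`, and
products of `c` elements applied to `ann(pⁱ)` lie in `p·ann(pⁱ)`. -/
def Property3 (p : ℕ) (A : Type*) [PreLieRing A] : Prop :=
  (∀ (l : List A) (b : A), l.length + 1 = (p - 1) / 4 → nestedMul l b ∈ pA p 1) ∧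
  (∀ i : ℕ, 1 ≤ i → ∀ l : List A, l.length = (p - 1) / 4 →
    ∀ b ∈ ann p i, ∃ y ∈ ann p i, nestedMul l b = p • y)

end PreLieRing

open PreLieRing

theorem PreLieRing.nestedMul_append {A : Type*} [PreLieRing A] (l₁ l₂ : List A) (b : A) :
    nestedMul (l₁ ++ l₂) b = nestedMul l₁ (nestedMul l₂ b) := by
  induction l₁ with
  | nil => rfl
  | cons a l ih => simp [nestedMul, ih]


theorem statement15 {A : Type*} [PreLieRing A] [Fintype A] (p n : ℕ) (hp : p.Prime)
    (hp3 : 3 < p) (hcard : Fintype.card A = p ^ n) (hP3 : Property3 p A) :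
    ∀ s : ℕ, 1 ≤ s → ∀ l : List A, l.length = s * ((p - 1) / 4) →
      ∀ b ∈ ann p s, nestedMul l b = 0 := by
  intro s hs
  induction s with
  | zero => omega
  | succ s ih =>
    intro l hl b hb
    rcases Nat.eq_zero_or_pos s with rfl | hs'
    · obtain ⟨y, hy, heq⟩ := hP3.2 1 le_rfl l (by simpa using hl) b hb
      rw [heq]
      have hy1 : (p ^ 1 : ℕ) • y = 0 := hy
      simpa using hy1
    · obtain ⟨y, hy, heq⟩ := hP3.2 (s+1) (by omega) (l.drop (s * ((p-1)/4)))
        (by simp [hl]; ring_nf; omega) b hb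
      have hmem : (p • y) ∈ ann p s := by
        have hy' : (p ^ (s+1) : ℕ) • y = 0 := hy
        show (p ^ s : ℕ) • (p • y) = 0
        rw [smul_smul, ← pow_succ]
        exact hy'
      have key : nestedMul l b = nestedMul (l.take (s * ((p-1)/4))) (p • y) := by
        rw [← heq, ← PreLieRing.nestedMul_append, List.take_append_drop]
      rw [key]
      exact ih hs' _ (by simp [hl]) _ hmem
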